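/- For every pair of points α ∈ P_6^1 and β ∈ P_6^2, neither α(0) ⊆ β(0) nor β(0) ⊆ α(0); that is, there exist indices i ≠ j such that α_i = 0, β_i ≠ 0 and α_j ≠ 0, β_j = 0. -/
import Mathlib


/-- A cap set in `AG(n,3)`: no three distinct points sum to zero. -/
def IsCap {n : ℕ} (C : Set (Fin n → ZMod 3)) : Prop :=
  ∀ a ∈ C, ∀ b ∈ C, ∀ c ∈ C, a ≠ b → a ≠ c → b ≠ c → a + b + c ≠ 0

/-- A complete cap set: a cap set that cannot be extended by any new point. -/
def IsCompleteCap {n : ℕ} (C : Set (Fin n → ZMod 3)) : Prop :=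
  IsCap C ∧ ∀ x ∉ C, ¬ IsCap (insert x C)

/-- `x(0)`: the set of coordinates where `x` vanishes. -/
def zeroSet {n : ℕ} (x : Fin n → ZMod 3) : Set (Fin n) := {i | x i = 0}

/-- `X(x)`: the set of points with the same zero set as `x`. -/
def Xset {n : ℕ} (x : Fin n → ZMod 3) : Set (Fin n → ZMod 3) :=
  {a | zeroSet a = zeroSet x}

/-- `B_n`: all points with no zero coordinates. -/
def Bset (n : ℕ) : Set (Fin n → ZMod 3) := {a | ∀ i, a i ≠ 0}

/-- A `P_n`-set. -/
def IsPSet {n : ℕ} (A : Set (Fin n → ZMod 3)) : Prop :=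
  (∀ a ∈ A, ∀ b ∈ A, a ≠ b → ∃ i, a i = 0 ∧ b i = 0) ∧
  (∀ a ∈ A, ∀ b ∈ A, ∀ c ∈ A, a ≠ b → a ≠ c → b ≠ c → a + b + c ≠ 0)

/-- A complete `P_n`-set: it cannot be extended by a new point to a `P_n`-set. -/
def IsCompletePSet {n : ℕ} (A : Set (Fin n → ZMod 3)) : Prop :=
  IsPSet A ∧ ∀ x ∉ A, ¬ IsPSet (insert x A)

/-- A `b`-saturated set: `X(α) ⊆ A` for every `α ∈ A`. -/
def IsBSaturated {n : ℕ} (A : Set (Fin n → ZMod 3)) : Prop :=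
  ∀ a ∈ A, Xset a ⊆ A

/-- Concatenation (product) of sets of points. -/
def concat {n m : ℕ} (A : Set (Fin n → ZMod 3)) (B : Set (Fin m → ZMod 3)) :
    Set (Fin (n + m) → ZMod 3) :=
  {x | ∃ a ∈ A, ∃ b ∈ B, x = Fin.append a b}

/-- The ten 3-element index sets (0-indexed versions of the 1-indexed triples
`{1,2,3},{1,2,6},{1,3,5},{2,3,4},{3,4,6},{3,5,6},{2,4,5},{2,5,6},{1,4,6},{1,4,5}`). -/
def S6 : Set (Set (Fin 6)) :=
  {{0, 1, 2}, {0, 1, 5}, {0, 2, 4}, {1, 2, 3}, {2, 3, 5},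
   {2, 4, 5}, {1, 3, 4}, {1, 4, 5}, {0, 3, 5}, {0, 3, 4}}

/-- `P₆¹`: points of `AG(6,3)` vanishing exactly on one of the triples in `S6`. -/
def P61 : Set (Fin 6 → ZMod 3) := {a | zeroSet a ∈ S6}

/-- `P₆²`: the mirror inversion of `P₆¹` (image under coordinate reversal). -/
def P62 : Set (Fin 6 → ZMod 3) := (fun a => a ∘ Fin.rev) '' P61

/-- `e_{i,b}`: the vector with `i`-th coordinate `b` and all other coordinates `0`. -/
def evec (i : Fin 6) (b : ZMod 3) : Fin 6 → ZMod 3 := fun j => if j = i then b else 0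

/-- `P₆³ = {e_{i,1}, e_{i,2} : i}`. -/
def P63 : Set (Fin 6 → ZMod 3) := {x | ∃ i : Fin 6, x = evec i 1 ∨ x = evec i 2}


/-- Finset versions of the triples in `S6`. -/
def S6L : List (Finset (Fin 6)) :=
  [{0, 1, 2}, {0, 1, 5}, {0, 2, 4}, {1, 2, 3}, {2, 3, 5},
   {2, 4, 5}, {1, 3, 4}, {1, 4, 5}, {0, 3, 5}, {0, 3, 4}]

lemma mem_S6L {s : Finset (Fin 6)} (h : (↑s : Set (Fin 6)) ∈ S6) : s ∈ S6L := by
  have hex : ∃ t ∈ S6L, (↑s : Set (Fin 6)) = ↑t := by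
    simp only [S6, Set.mem_insert_iff, Set.mem_singleton_iff] at h
    rcases h with h|h|h|h|h|h|h|h|h|h
    · exact ⟨{0, 1, 2}, by decide, by rw [h]; simp⟩
    · exact ⟨{0, 1, 5}, by decide, by rw [h]; simp⟩
    · exact ⟨{0, 2, 4}, by decide, by rw [h]; simp⟩
    · exact ⟨{1, 2, 3}, by decide, by rw [h]; simp⟩
    · exact ⟨{2, 3, 5}, by decide, by rw [h]; simp⟩
    · exact ⟨{2, 4, 5}, by decide, by rw [h]; simp⟩
    · exact ⟨{1, 3, 4}, by decide, by rw [h]; simp⟩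
    · exact ⟨{1, 4, 5}, by decide, by rw [h]; simp⟩
    · exact ⟨{0, 3, 5}, by decide, by rw [h]; simp⟩
    · exact ⟨{0, 3, 4}, by decide, by rw [h]; simp⟩
  obtain ⟨t, ht, he⟩ := hex
  rwa [Finset.coe_inj.mp he]

set_option maxRecDepth 100000 in
lemma key_S6L : ∀ s ∈ S6L, ∀ t ∈ S6L,
    ∃ i j : Fin 6, i ≠ j ∧ i ∈ s ∧ i.rev ∉ t ∧ j ∉ s ∧ j.rev ∈ t := by decide

/-- For `α ∈ P₆¹` and `β ∈ P₆²`, neither `α(0) ⊆ β(0)` nor `β(0) ⊆ α(0)`; that is,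
there are indices `i ≠ j` with `α i = 0, β i ≠ 0` and `α j ≠ 0, β j = 0`. -/
theorem P61_P62_zeroSets_incomparable :
    ∀ a ∈ P61, ∀ b ∈ P62,
      (¬ zeroSet a ⊆ zeroSet b ∧ ¬ zeroSet b ⊆ zeroSet a) ∧
      ∃ i j : Fin 6, i ≠ j ∧ a i = 0 ∧ b i ≠ 0 ∧ a j ≠ 0 ∧ b j = 0 := by
  intro a ha b hb
  obtain ⟨a', ha', rfl⟩ := hb
  have hFa : ((Finset.univ.filter (fun i => a i = 0) : Finset (Fin 6)) : Set (Fin 6)) = zeroSet a := by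
    ext i; simp [zeroSet]
  have hFa' : ((Finset.univ.filter (fun i => a' i = 0) : Finset (Fin 6)) : Set (Fin 6)) = zeroSet a' := by
    ext i; simp [zeroSet]
  have hs : (Finset.univ.filter (fun i => a i = 0)) ∈ S6L := mem_S6L (by rw [hFa]; exact ha)
  have ht : (Finset.univ.filter (fun i => a' i = 0)) ∈ S6L := mem_S6L (by rw [hFa']; exact ha')
  obtain ⟨i, j, hij, hi1, hi2, hj1, hj2⟩ := key_S6L _ hs _ ht
  simp only [Finset.mem_filter, Finset.mem_univ, true_and] at hi1 hi2 hj1 hj2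
  have hb_i : (a' ∘ Fin.rev) i ≠ 0 := hi2
  have hb_j : (a' ∘ Fin.rev) j = 0 := hj2
  refine ⟨⟨fun hsub => hb_i (hsub hi1), fun hsub => hj1 (hsub hb_j)⟩,
    i, j, hij, hi1, hb_i, hj1, hb_j⟩
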